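/- Let G be a proper étale Hausdorff groupoid with compact orbit space acting affinely on a locally compact space Y over G^(0) whose anchor map p : Y → G^(0) admits a continuous (not necessarily equivariant) section s, and whose fibres Y_u are convex. Then there exists a continuous G-equivariant section s̃ : G^(0) → Y of p, namely s̃(u) = Σ_{k ∈ G^u} c(d(k)) · (k · s(d(k))) where c is a compactly supported cutoff function for G; consequently p is a G-equivariant homotopy equivalence between Y and G^(0). -/

import Mathlib

/-!
Properness of `G` and compactness of the support of `c` make every sum `Σ_{k ∈ G^u}` finite, and
near each unit the étale range map has finitely many local inverses through the relevant arrows,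
so `s̃` is locally a finite sum of continuous functions. Since `Σ_{k ∈ G^u} c(d k) = 1`, `s̃(u)` is
a convex combination of points of `Y_u`; the action commutes with such combinations, and
`k ↦ g k` identifies `G^{d g}` with `G^{r g}`, which gives equivariance. The fibrewise linear
homotopy between `id_Y` and `s̃ ∘ p` then stays in the convex fibres and is equivariant.
-/

open MeasureTheory Topology Filter
open scoped ENNReal

universe u v

/-- A locally compact Hausdorff groupoid, modelled as a type `G` with a partially
defined multiplication (via the composability predicate `Comp`), an inversion,
and continuity of the structure maps. -/
structure TopGroupoid (G : Type u) [TopologicalSpace G] where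
  mul : G → G → G
  inv : G → G
  Comp : G → G → Prop
  inv_inv : ∀ g, inv (inv g) = g
  comp_inv : ∀ g, Comp g (inv g)
  comp_iff : ∀ g h, Comp g h ↔ mul (inv g) g = mul h (inv h)
  assoc : ∀ g₁ g₂ g₃, Comp g₁ g₂ → Comp g₂ g₃ →
    Comp (mul g₁ g₂) g₃ ∧ Comp g₁ (mul g₂ g₃) ∧
      mul (mul g₁ g₂) g₃ = mul g₁ (mul g₂ g₃)
  inv_mul_cancel_left : ∀ g h, Comp g h → mul (inv g) (mul g h) = h
  mul_inv_cancel_right : ∀ g h, Comp g h → mul (mul g h) (inv h) = g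
  dmul : ∀ g h, Comp g h → mul (inv (mul g h)) (mul g h) = mul (inv h) h
  rmul : ∀ g h, Comp g h → mul (mul g h) (inv (mul g h)) = mul g (inv g)
  continuous_inv : Continuous inv
  continuous_mul : Continuous fun p : {p : G × G // Comp p.1 p.2} => mul p.1.1 p.1.2

namespace TopGroupoid

variable {G : Type u} [TopologicalSpace G] (𝒢 : TopGroupoid G)

/-- The domain map `d(g) = g⁻¹ g`. -/
def d (g : G) : G := 𝒢.mul (𝒢.inv g) g

/-- The range map `r(g) = g g⁻¹`. -/
def r (g : G) : G := 𝒢.mul g (𝒢.inv g)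

/-- The unit space `G⁽⁰⁾ = {g | g = g⁻¹ = g²}`. -/
def units : Set G := {g | 𝒢.inv g = g ∧ 𝒢.mul g g = g}

theorem comp_iff' (g h : G) : 𝒢.Comp g h ↔ 𝒢.d g = 𝒢.r h := 𝒢.comp_iff g h

theorem d_inv (g : G) : 𝒢.d (𝒢.inv g) = 𝒢.r g := by
  simp only [d, r, 𝒢.inv_inv]

theorem r_inv (g : G) : 𝒢.r (𝒢.inv g) = 𝒢.d g := by
  simp only [d, r, 𝒢.inv_inv]

theorem d_mul {g h : G} (hc : 𝒢.Comp g h) : 𝒢.d (𝒢.mul g h) = 𝒢.d h := 𝒢.dmul g h hc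

theorem r_mul {g h : G} (hc : 𝒢.Comp g h) : 𝒢.r (𝒢.mul g h) = 𝒢.r g := 𝒢.rmul g h hc

theorem comp_inv_right {g h : G} (hd : 𝒢.d g = 𝒢.d h) : 𝒢.Comp g (𝒢.inv h) := by
  rw [𝒢.comp_iff', 𝒢.r_inv]; exact hd

theorem comp_inv_left {g h : G} (hr : 𝒢.r g = 𝒢.r h) : 𝒢.Comp (𝒢.inv g) h := by
  rw [𝒢.comp_iff', 𝒢.d_inv]; exact hr

/-- `G` is étale if the domain map is a local homeomorphism. -/
def Etale : Prop := IsLocalHomeomorph 𝒢.d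

/-- An open bisection: an open set on which both `d` and `r` restrict to
homeomorphisms onto open subsets. -/
def IsBisection (U : Set G) : Prop :=
  IsOpen U ∧ IsOpenEmbedding (U.restrict 𝒢.d) ∧ IsOpenEmbedding (U.restrict 𝒢.r)

/-- `G` is ample if the compact open bisections form a basis of the topology. -/
def Ample : Prop :=
  TopologicalSpace.IsTopologicalBasis {U : Set G | 𝒢.IsBisection U ∧ IsCompact U}

/-- A subgroupoid: a subset closed under inversion and (composable) products. -/
def IsSubgroupoid (H : Set G) : Prop :=
  (∀ g ∈ H, 𝒢.inv g ∈ H) ∧ ∀ g h, g ∈ H → h ∈ H → 𝒢.Comp g h → 𝒢.mul g h ∈ H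

end TopGroupoid


/-- The canonical equivariant section built from a cutoff function:
`s̃(u) = Σ_{k ∈ G^u} c(d k) • (k · s(d k))`. -/
noncomputable def tildeS {G : Type u} [TopologicalSpace G] (𝒢 : TopGroupoid G)
    {V : Type v} [AddCommGroup V] [Module ℝ V]
    (act : G → V → V) (c : G → ℝ) (s : G → V) (u : G) : V :=
  ∑ᶠ k ∈ {k : G | 𝒢.r k = u}, c (𝒢.d k) • act k (s (𝒢.d k))

open Set Function

section Convexity

variable {𝕜 E F : Type*} [Field 𝕜] [LinearOrder 𝕜] [IsStrictOrderedRing 𝕜]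
  [AddCommGroup E] [Module 𝕜 E] [AddCommGroup F] [Module 𝕜 F] {s : Set E}

theorem convex_of_forall_combo_mem
    (h : ∀ x y, x ∈ s → y ∈ s → ∀ a : 𝕜, 0 ≤ a → a ≤ 1 → a • x + (1 - a) • y ∈ s) :
    Convex 𝕜 s := by
  intro x hx y hy a b ha hb hab
  obtain rfl : b = 1 - a := by linarith
  exact h x y hx hy a ha (by linarith)

theorem map_sum_smul_of_forall_combo {f : E → F} (hs : Convex 𝕜 s)
    (hf : ∀ x y, x ∈ s → y ∈ s → ∀ a : 𝕜, 0 ≤ a → a ≤ 1 →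
      f (a • x + (1 - a) • y) = a • f x + (1 - a) • f y)
    {ι : Type*} {t : Finset ι} {w : ι → 𝕜} {z : ι → E} (h₀ : ∀ i ∈ t, 0 ≤ w i)
    (h₁ : ∑ i ∈ t, w i = 1) (hz : ∀ i ∈ t, z i ∈ s) :
    f (∑ i ∈ t, w i • z i) = ∑ i ∈ t, w i • f (z i) := by
  have hgraph : Convex 𝕜 ((fun x => (x, f x)) '' s) := by
    rintro _ ⟨x, hx, rfl⟩ _ ⟨y, hy, rfl⟩ a b ha hb hab
    obtain rfl : b = 1 - a := by linarith
    exact ⟨_, hs hx hy ha hb hab, by simp [hf x y hx hy a ha (by linarith)]⟩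
  obtain ⟨x, -, hx⟩ := hgraph.sum_mem h₀ h₁ fun i hi => mem_image_of_mem _ (hz i hi)
  simp only [Prod.ext_iff, Prod.fst_sum, Prod.snd_sum, Prod.smul_fst, Prod.smul_snd] at hx
  rw [← hx.1, hx.2]

end Convexity

theorem finsum_mem_eq_sum_of_support_subset {α M : Type*} [AddCommMonoid M] {s D : Set α}
    (f : α → M) (hsD : (s ∩ D).Finite) (hf : support f ⊆ D) :
    ∑ᶠ i ∈ s, f i = ∑ i ∈ hsD.toFinset, f i :=
  finsum_mem_eq_sum_of_inter_support_eq f <| by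
    rw [hsD.coe_toFinset, inter_assoc, inter_eq_right.mpr hf]

namespace IsLocalHomeomorph

variable {E X : Type*} [TopologicalSpace E] [TopologicalSpace X] {p : E → X}

theorem isDiscrete_preimage_singleton (hp : IsLocalHomeomorph p) (x : X) :
    IsDiscrete (p ⁻¹' {x}) := by
  refine isDiscrete_iff_forall_mem_exists_isOpen.mpr fun k hk => ?_
  obtain ⟨e, hke, hpe⟩ := hp k
  refine ⟨e.source, e.open_source, eq_singleton_iff_unique_mem.mpr ⟨⟨hke, hk⟩, ?_⟩⟩
  rintro k' ⟨hk'e, hk'x⟩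
  exact e.injOn hk'e hke (by rw [← hpe, hk'x, hk])

theorem exists_pairwiseDisjoint_charts [T2Space E] (hp : IsLocalHomeomorph p) (T : Finset E) :
    ∃ e : E → OpenPartialHomeomorph E X, (∀ k, k ∈ (e k).source ∧ p = e k) ∧
      (T : Set E).PairwiseDisjoint fun k => (e k).source := by
  obtain ⟨U, hU, hUdisj⟩ := T.finite_toSet.t2_separation
  choose e hke hpe using hp
  exact ⟨fun k => (e k).restrOpen (U k) (hU k).2,
    fun k => ⟨⟨hke k, (hU k).1⟩, hpe k⟩,
    hUdisj.mono fun k => inter_subset_right⟩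

theorem finsum_preimage_singleton_eq_sum_symm {V : Type*} [AddCommMonoid V] {F : E → V}
    {T : Finset E} {e : E → OpenPartialHomeomorph E X} (he : ∀ k, p = e k)
    (hdisj : (T : Set E).PairwiseDisjoint fun k => (e k).source) {x : X}
    (hx : ∀ k ∈ T, x ∈ (e k).target) (hsupp : p ⁻¹' {x} ∩ support F ⊆ ⋃ k ∈ T, (e k).source) :
    ∑ᶠ k ∈ p ⁻¹' {x}, F k = ∑ k ∈ T, F ((e k).symm x) := by
  have hfib : ∀ k ∈ T, (e k).source ∩ p ⁻¹' {x} = {(e k).symm x} := fun k hk => by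
    rw [he k, ← image_singleton,
      (e k).symm_image_eq_source_inter_preimage (singleton_subset_iff.mpr (hx k hk))]
  calc ∑ᶠ k ∈ p ⁻¹' {x}, F k = ∑ᶠ k ∈ ⋃ j ∈ (T : Set E), (e j).source ∩ p ⁻¹' {x}, F k := by
        refine finsum_mem_inter_support_eq F _ _ ?_
        rw [← iUnion₂_inter, inter_assoc, Finset.set_biUnion_coe, inter_eq_right.mpr hsupp]
    _ = ∑ᶠ j ∈ (T : Set E), ∑ᶠ k ∈ (e j).source ∩ p ⁻¹' {x}, F k :=
        finsum_mem_biUnion (hdisj.mono fun _ => inter_subset_left) T.finite_toSet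
          fun j hj => (hfib j hj).symm ▸ finite_singleton _
    _ = ∑ k ∈ T, F ((e k).symm x) := by
        rw [finsum_mem_coe_finset]
        exact Finset.sum_congr rfl fun j hj => by rw [hfib j hj, finsum_mem_singleton]

theorem continuous_finsum_preimage_singleton [T2Space E] [T2Space X] [LocallyCompactSpace X]
    {V : Type*} [AddCommMonoid V] [TopologicalSpace V] [ContinuousAdd V]
    (hp : IsLocalHomeomorph p) {F : E → V} (hF : Continuous F)
    (hproper : ∀ N, IsCompact N → IsCompact (p ⁻¹' N ∩ tsupport F)) :
    Continuous fun x => ∑ᶠ k ∈ p ⁻¹' {x}, F k := by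
  refine continuous_iff_continuousAt.mpr fun x₀ => ?_
  obtain ⟨N, hN, hNx₀⟩ := exists_compact_mem_nhds x₀
  have hT : (p ⁻¹' {x₀} ∩ tsupport F).Finite := (hproper {x₀} isCompact_singleton).finite
    ((hp.isDiscrete_preimage_singleton x₀).mono inter_subset_left)
  set T := hT.toFinset
  obtain ⟨e, he, hdisj⟩ := hp.exists_pairwiseDisjoint_charts T
  have hx₀ : ∀ k ∈ T, x₀ ∈ (e k).target := fun k hk => by
    rw [← (hT.mem_toFinset.mp hk).1, (he k).2]
    exact (e k).map_source (he k).1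
  -- near `x₀`, every point of a fibre in `tsupport F` lies in one of the charts, since the
  -- uncovered part `A` has closed image missing `x₀`
  set A := (p ⁻¹' N ∩ tsupport F) \ ⋃ k ∈ T, (e k).source
  have hA : IsClosed (p '' A) := (((hproper N hN).diff
    (isOpen_biUnion fun k _ => (e k).open_source)).image hp.continuous).isClosed
  have hx₀A : x₀ ∉ p '' A := by
    rintro ⟨k, ⟨⟨-, hkF⟩, hkT⟩, hkx₀⟩
    exact hkT (mem_biUnion (hT.mem_toFinset.mpr ⟨hkx₀, hkF⟩) (he k).1)
  have hW : N ∩ (p '' A)ᶜ ∩ ⋂ k ∈ T, (e k).target ∈ 𝓝 x₀ :=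
    inter_mem (inter_mem hNx₀ (hA.isOpen_compl.mem_nhds hx₀A))
      ((biInter_finset_mem T).mpr fun k hk => (e k).open_target.mem_nhds (hx₀ k hk))
  refine ContinuousAt.congr ?_ (eventually_of_mem hW fun x ⟨⟨hxN, hxA⟩, hxT⟩ =>
    (finsum_preimage_singleton_eq_sum_symm (fun k => (he k).2) hdisj (mem_iInter₂.mp hxT)
      fun k ⟨hkx, hkF⟩ => ?_).symm)
  · exact tendsto_finsetSum T fun k hk =>
      hF.continuousAt.comp ((e k).continuousAt_symm (hx₀ k hk))
  · by_contra hk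
    exact hxA ⟨k, ⟨⟨show p k ∈ N from (hkx : p k = x) ▸ hxN, subset_tsupport F hkF⟩, hk⟩, hkx⟩

end IsLocalHomeomorph

namespace TopGroupoid

variable {G : Type u} [TopologicalSpace G] (𝒢 : TopGroupoid G)

theorem comp_inv_left_self (g : G) : 𝒢.Comp (𝒢.inv g) g := 𝒢.comp_inv_left rfl

theorem d_d (g : G) : 𝒢.d (𝒢.d g) = 𝒢.d g := 𝒢.d_mul (𝒢.comp_inv_left_self g)

theorem r_d (g : G) : 𝒢.r (𝒢.d g) = 𝒢.d g :=
  (𝒢.r_mul (𝒢.comp_inv_left_self g)).trans (𝒢.r_inv g)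

theorem d_r (g : G) : 𝒢.d (𝒢.r g) = 𝒢.r g := by
  rw [← 𝒢.d_inv]
  exact 𝒢.d_d _

theorem inv_d (g : G) : 𝒢.inv (𝒢.d g) = 𝒢.d g := by
  have h := 𝒢.inv_mul_cancel_left (𝒢.d g) (𝒢.inv (𝒢.d g)) (𝒢.comp_inv _)
  change 𝒢.mul (𝒢.inv (𝒢.d g)) (𝒢.r (𝒢.d g)) = _ at h
  rw [r_d] at h
  exact h.symm.trans (𝒢.d_d g)

theorem d_mem_units (g : G) : 𝒢.d g ∈ 𝒢.units := by
  refine ⟨𝒢.inv_d g, ?_⟩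
  nth_rewrite 1 [← 𝒢.inv_d g]
  exact 𝒢.d_d g

theorem bijOn_mul_left (g : G) :
    BijOn (𝒢.mul g) {k | 𝒢.r k = 𝒢.d g} {k | 𝒢.r k = 𝒢.r g} := by
  have hcomp : ∀ k, 𝒢.r k = 𝒢.d g → 𝒢.Comp g k := fun k hk => (𝒢.comp_iff' g k).mpr hk.symm
  refine ⟨fun k hk => 𝒢.r_mul (hcomp k hk), fun k hk k' hk' h => ?_, fun k' hk' => ?_⟩
  · rw [← 𝒢.inv_mul_cancel_left g k (hcomp k hk), h, 𝒢.inv_mul_cancel_left g k' (hcomp k' hk')]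
  · have hc : 𝒢.Comp (𝒢.inv g) k' := 𝒢.comp_inv_left hk'.symm
    refine ⟨𝒢.mul (𝒢.inv g) k', ?_, ?_⟩
    · exact (𝒢.r_mul hc).trans (𝒢.r_inv g)
    · simpa only [𝒢.inv_inv] using 𝒢.inv_mul_cancel_left (𝒢.inv g) k' hc

theorem continuous_d : Continuous 𝒢.d :=
  𝒢.continuous_mul.comp
    ((𝒢.continuous_inv.prodMk continuous_id).subtype_mk 𝒢.comp_inv_left_self)

def invHomeomorph : G ≃ₜ G where
  toFun := 𝒢.inv
  invFun := 𝒢.inv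
  left_inv := 𝒢.inv_inv
  right_inv := 𝒢.inv_inv
  continuous_toFun := 𝒢.continuous_inv
  continuous_invFun := 𝒢.continuous_inv

theorem r_eq_d_comp_inv : 𝒢.r = 𝒢.d ∘ 𝒢.inv := funext fun g => (𝒢.d_inv g).symm

theorem continuous_r : Continuous 𝒢.r := by
  rw [r_eq_d_comp_inv]
  exact 𝒢.continuous_d.comp 𝒢.continuous_inv

theorem Etale.isLocalHomeomorph_r {𝒢 : TopGroupoid G} (hEt : 𝒢.Etale) :
    IsLocalHomeomorph 𝒢.r := by
  rw [r_eq_d_comp_inv]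
  exact hEt.comp 𝒢.invHomeomorph.isLocalHomeomorph

def IsProper : Prop :=
  ∀ K : Set G, K ⊆ 𝒢.units → IsCompact K → IsCompact (𝒢.d ⁻¹' K ∩ 𝒢.r ⁻¹' K)

structure IsCutoff (c : G → ℝ) : Prop where
  continuous : Continuous c
  nonneg : ∀ u, 0 ≤ c u
  hasCompactSupport : HasCompactSupport c
  finsum_fiber : ∀ u ∈ 𝒢.units, ∑ᶠ k ∈ {k : G | 𝒢.r k = u}, c (𝒢.d k) = 1

variable {𝒢}

theorem IsProper.isCompact_preimage_r_inter_preimage_d [T2Space G] (hProper : 𝒢.IsProper)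
    {N L : Set G} (hN : IsCompact N) (hL : IsCompact L) :
    IsCompact (𝒢.r ⁻¹' N ∩ 𝒢.d ⁻¹' L) := by
  set K := 𝒢.d '' N ∪ 𝒢.d '' L
  have hKu : K ⊆ 𝒢.units := by
    rintro _ (⟨g, -, rfl⟩ | ⟨g, -, rfl⟩) <;> exact 𝒢.d_mem_units g
  have hK : IsCompact K := (hN.image 𝒢.continuous_d).union (hL.image 𝒢.continuous_d)
  refine (hProper K hKu hK).of_isClosed_subset
    ((hN.isClosed.preimage 𝒢.continuous_r).inter (hL.isClosed.preimage 𝒢.continuous_d)) ?_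
  rintro k ⟨hkN, hkL⟩
  exact ⟨Or.inr ⟨_, hkL, 𝒢.d_d k⟩, Or.inl ⟨_, hkN, 𝒢.d_r k⟩⟩

section Cutoff

variable {c : G → ℝ} {V : Type v} [AddCommGroup V] [Module ℝ V] {Y : Set (G × V)}
  {act : G → V → V} {s : G → V}

theorem support_cutoff_smul_subset (f : G → V) :
    support (fun k => c (𝒢.d k) • f k) ⊆ 𝒢.d ⁻¹' tsupport c :=
  (support_smul_subset_left (fun k => c (𝒢.d k)) f).trans fun _ hk => subset_tsupport c hk

variable [T2Space G]

theorem IsCutoff.finite_fiber (hc : 𝒢.IsCutoff c) (hEt : 𝒢.Etale) (hProper : 𝒢.IsProper)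
    (u : G) : ({k | 𝒢.r k = u} ∩ 𝒢.d ⁻¹' tsupport c).Finite :=
  (hProper.isCompact_preimage_r_inter_preimage_d isCompact_singleton hc.hasCompactSupport).finite
    ((hEt.isLocalHomeomorph_r.isDiscrete_preimage_singleton u).mono inter_subset_left)

theorem IsCutoff.sum_fiber (hc : 𝒢.IsCutoff c) (hEt : 𝒢.Etale) (hProper : 𝒢.IsProper)
    {u : G} (hu : u ∈ 𝒢.units) :
    ∑ k ∈ (hc.finite_fiber hEt hProper u).toFinset, c (𝒢.d k) = 1 := by
  rw [← hc.finsum_fiber u hu]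
  exact (finsum_mem_eq_sum_of_support_subset (fun k => c (𝒢.d k)) (hc.finite_fiber hEt hProper u)
    fun _ hk => subset_tsupport c hk).symm

theorem tildeS_eq_sum (hc : 𝒢.IsCutoff c) (hEt : 𝒢.Etale) (hProper : 𝒢.IsProper) (u : G) :
    tildeS 𝒢 act c s u =
      ∑ k ∈ (hc.finite_fiber hEt hProper u).toFinset, c (𝒢.d k) • act k (s (𝒢.d k)) :=
  finsum_mem_eq_sum_of_support_subset _ _ (support_cutoff_smul_subset _)

theorem tildeS_mem (hc : 𝒢.IsCutoff c) (hEt : 𝒢.Etale) (hProper : 𝒢.IsProper)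
    (hY : ∀ u, Convex ℝ {v | (u, v) ∈ Y})
    (hact_mem : ∀ g v, (𝒢.d g, v) ∈ Y → (𝒢.r g, act g v) ∈ Y)
    (hs_mem : ∀ u ∈ 𝒢.units, (u, s u) ∈ Y) {u : G} (hu : u ∈ 𝒢.units) :
    (u, tildeS 𝒢 act c s u) ∈ Y := by
  rw [tildeS_eq_sum hc hEt hProper]
  refine (hY u).sum_mem (fun _ _ => hc.nonneg _) (hc.sum_fiber hEt hProper hu) fun k hk => ?_
  obtain ⟨rfl, -⟩ := (Finite.mem_toFinset _).mp hk
  exact hact_mem k _ (hs_mem _ (𝒢.d_mem_units k))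

theorem tildeS_r_eq_act (hc : 𝒢.IsCutoff c) (hEt : 𝒢.Etale) (hProper : 𝒢.IsProper)
    (hY : ∀ u, Convex ℝ {v | (u, v) ∈ Y})
    (hact_mem : ∀ g v, (𝒢.d g, v) ∈ Y → (𝒢.r g, act g v) ∈ Y)
    (hact_mul : ∀ g h v, 𝒢.Comp g h → (𝒢.d h, v) ∈ Y →
      act (𝒢.mul g h) v = act g (act h v))
    (haffine : ∀ g v w, (𝒢.d g, v) ∈ Y → (𝒢.d g, w) ∈ Y → ∀ a : ℝ, 0 ≤ a → a ≤ 1 →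
      act g (a • v + (1 - a) • w) = a • act g v + (1 - a) • act g w)
    (hs_mem : ∀ u ∈ 𝒢.units, (u, s u) ∈ Y) (g : G) :
    tildeS 𝒢 act c s (𝒢.r g) = act g (tildeS 𝒢 act c s (𝒢.d g)) := by
  have hS := hc.finite_fiber hEt hProper (𝒢.d g)
  have hYk : ∀ k, (𝒢.d k, s (𝒢.d k)) ∈ Y := fun k => hs_mem _ (𝒢.d_mem_units k)
  calc tildeS 𝒢 act c s (𝒢.r g)
      = ∑ᶠ k ∈ {k | 𝒢.r k = 𝒢.d g}, c (𝒢.d k) • act g (act k (s (𝒢.d k))) := by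
        refine (finsum_mem_eq_of_bijOn _ (𝒢.bijOn_mul_left g) fun k hk => ?_).symm
        have hgk : 𝒢.Comp g k := (𝒢.comp_iff' g k).mpr (Eq.symm hk)
        rw [𝒢.d_mul hgk, hact_mul g k _ hgk (hYk k)]
    _ = ∑ k ∈ hS.toFinset, c (𝒢.d k) • act g (act k (s (𝒢.d k))) :=
        finsum_mem_eq_sum_of_support_subset _ _ (support_cutoff_smul_subset _)
    _ = act g (∑ k ∈ hS.toFinset, c (𝒢.d k) • act k (s (𝒢.d k))) := by
        refine (map_sum_smul_of_forall_combo (hY _) (haffine g) (fun _ _ => hc.nonneg _)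
          (hc.sum_fiber hEt hProper (𝒢.d_mem_units g)) fun k hk => ?_).symm
        obtain ⟨hk, -⟩ := (Finite.mem_toFinset _).mp hk
        exact hk ▸ hact_mem k _ (hYk k)
    _ = act g (tildeS 𝒢 act c s (𝒢.d g)) := by rw [tildeS_eq_sum hc hEt hProper]

theorem continuous_tildeS [LocallyCompactSpace G] [TopologicalSpace V] [ContinuousAdd V]
    [ContinuousSMul ℝ V] (hc : 𝒢.IsCutoff c) (hEt : 𝒢.Etale) (hProper : 𝒢.IsProper)
    (hact_cont : ContinuousOn (fun q : G × V => act q.1 q.2) {q : G × V | (𝒢.d q.1, q.2) ∈ Y})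
    (hs_cont : ContinuousOn s 𝒢.units) (hs_mem : ∀ u ∈ 𝒢.units, (u, s u) ∈ Y) :
    Continuous (tildeS 𝒢 act c s) := by
  set F : G → V := fun k => c (𝒢.d k) • act k (s (𝒢.d k))
  have hF : Continuous F := (hc.continuous.comp 𝒢.continuous_d).smul
    (hact_cont.comp_continuous
      (continuous_id.prodMk (hs_cont.comp_continuous 𝒢.continuous_d 𝒢.d_mem_units))
      fun k => hs_mem _ (𝒢.d_mem_units k))
  have hFsupp : tsupport F ⊆ 𝒢.d ⁻¹' tsupport c := (tsupport_smul_subset_left _ _).trans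
    (tsupport_comp_subset_preimage c 𝒢.continuous_d)
  exact hEt.isLocalHomeomorph_r.continuous_finsum_preimage_singleton hF fun N hN =>
    (hProper.isCompact_preimage_r_inter_preimage_d hN hc.hasCompactSupport).of_isClosed_subset
      ((hN.isClosed.preimage 𝒢.continuous_r).inter (isClosed_tsupport F))
      (inter_subset_inter_right _ hFsupp)

end Cutoff

end TopGroupoid

theorem exists_equivariant_linear_homotopy {G : Type u} [TopologicalSpace G] {𝒢 : TopGroupoid G}
    {V : Type v} [AddCommGroup V] [Module ℝ V] [TopologicalSpace V] [ContinuousAdd V]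
    [ContinuousSMul ℝ V] {Y : Set (G × V)} {act : G → V → V}
    (hYanchor : ∀ y ∈ Y, y.1 ∈ 𝒢.units) (hY : ∀ u, Convex ℝ {v | (u, v) ∈ Y})
    (haffine : ∀ g v w, (𝒢.d g, v) ∈ Y → (𝒢.d g, w) ∈ Y → ∀ a : ℝ, 0 ≤ a → a ≤ 1 →
      act g (a • v + (1 - a) • w) = a • act g v + (1 - a) • act g w)
    {σ : G → V} (hσ : Continuous σ) (hσ_mem : ∀ u ∈ 𝒢.units, (u, σ u) ∈ Y)
    (hσ_equiv : ∀ g : G, σ (𝒢.r g) = act g (σ (𝒢.d g))) :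
    ∃ F : ℝ × (G × V) → G × V,
      ContinuousOn F (Set.Icc (0 : ℝ) 1 ×ˢ Y) ∧
      (∀ t ∈ Set.Icc (0 : ℝ) 1, ∀ y ∈ Y, F (t, y) ∈ Y ∧ (F (t, y)).1 = y.1) ∧
      (∀ y ∈ Y, F (0, y) = y) ∧
      (∀ y ∈ Y, F (1, y) = (y.1, σ y.1)) ∧
      (∀ t ∈ Set.Icc (0 : ℝ) 1, ∀ g : G, ∀ v : V, (𝒢.d g, v) ∈ Y →
        F (t, (𝒢.r g, act g v)) = (𝒢.r g, act g (F (t, (𝒢.d g, v))).2)) := by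
  refine ⟨fun q => (q.2.1, (1 - q.1) • q.2.2 + q.1 • σ q.2.1), by fun_prop, ?_, ?_, ?_, ?_⟩
  · rintro t ⟨ht₀, ht₁⟩ ⟨u, v⟩ hv
    exact ⟨hY u hv (hσ_mem u (hYanchor _ hv)) (sub_nonneg.mpr ht₁) ht₀ (sub_add_cancel 1 t), rfl⟩
  · rintro ⟨u, v⟩ -
    simp
  · rintro ⟨u, v⟩ -
    simp
  · rintro t ⟨ht₀, ht₁⟩ g v hv
    have h := haffine g v (σ (𝒢.d g)) hv (hσ_mem _ (𝒢.d_mem_units g)) (1 - t)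
      (sub_nonneg.mpr ht₁) (sub_le_self 1 ht₀)
    rw [sub_sub_cancel] at h
    simp only [h, hσ_equiv]

theorem equivariant_section_and_homotopy_equivalence_general {G : Type u}
    [TopologicalSpace G] [T2Space G] [LocallyCompactSpace G]
    {V : Type v} [AddCommGroup V] [Module ℝ V] [TopologicalSpace V]
    [IsTopologicalAddGroup V] [ContinuousSMul ℝ V]
    (𝒢 : TopGroupoid G) (hEt : 𝒢.Etale)
    (hProper : ∀ K : Set G, K ⊆ 𝒢.units → IsCompact K →
      IsCompact (𝒢.d ⁻¹' K ∩ 𝒢.r ⁻¹' K))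
    (Y : Set (G × V)) (hYanchor : ∀ y ∈ Y, y.1 ∈ 𝒢.units)
    -- the fibres `Y_u` are convex
    (hconv : ∀ u v w, (u, v) ∈ Y → (u, w) ∈ Y → ∀ a : ℝ, 0 ≤ a → a ≤ 1 →
      (u, a • v + (1 - a) • w) ∈ Y)
    -- a continuous affine action of `G` on `Y`
    (act : G → V → V)
    (hact_mem : ∀ g v, (𝒢.d g, v) ∈ Y → (𝒢.r g, act g v) ∈ Y)
    (hact_cont : ContinuousOn (fun q : G × V => act q.1 q.2)
      {q : G × V | (𝒢.d q.1, q.2) ∈ Y})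
    (hact_mul : ∀ g h v, 𝒢.Comp g h → (𝒢.d h, v) ∈ Y →
      act (𝒢.mul g h) v = act g (act h v))
    (haffine : ∀ g v w, (𝒢.d g, v) ∈ Y → (𝒢.d g, w) ∈ Y → ∀ a : ℝ, 0 ≤ a → a ≤ 1 →
      act g (a • v + (1 - a) • w) = a • act g v + (1 - a) • act g w)
    -- a compactly supported cutoff function
    (c : G → ℝ) (hc : Continuous c) (hc0 : ∀ u, 0 ≤ c u)
    (hsupp : HasCompactSupport c)
    (hsum : ∀ u ∈ 𝒢.units, ∑ᶠ k ∈ {k : G | 𝒢.r k = u}, c (𝒢.d k) = 1)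
    -- a continuous (not necessarily equivariant) section of the anchor map
    (s : G → V) (hs_cont : ContinuousOn s 𝒢.units)
    (hs_mem : ∀ u ∈ 𝒢.units, (u, s u) ∈ Y) :
    -- `s̃` is a continuous equivariant section:
    ContinuousOn (tildeS 𝒢 act c s) 𝒢.units ∧
    (∀ u ∈ 𝒢.units, (u, tildeS 𝒢 act c s u) ∈ Y) ∧
    (∀ g : G, tildeS 𝒢 act c s (𝒢.r g) = act g (tildeS 𝒢 act c s (𝒢.d g))) ∧
    -- consequently the anchor map is a `G`-equivariant homotopy equivalence,
    -- witnessed by the fibrewise linear homotopy from `id` to `s̃ ∘ p`: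
    (∃ F : ℝ × (G × V) → G × V,
      ContinuousOn F (Set.Icc (0 : ℝ) 1 ×ˢ Y) ∧
      (∀ t ∈ Set.Icc (0 : ℝ) 1, ∀ y ∈ Y, F (t, y) ∈ Y ∧ (F (t, y)).1 = y.1) ∧
      (∀ y ∈ Y, F (0, y) = y) ∧
      (∀ y ∈ Y, F (1, y) = (y.1, tildeS 𝒢 act c s y.1)) ∧
      (∀ t ∈ Set.Icc (0 : ℝ) 1, ∀ g : G, ∀ v : V, (𝒢.d g, v) ∈ Y →
        F (t, (𝒢.r g, act g v)) = (𝒢.r g, act g (F (t, (𝒢.d g, v))).2))) := by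
  have hY : ∀ u, Convex ℝ {v | (u, v) ∈ Y} := fun u => convex_of_forall_combo_mem (hconv u)
  have hcut : 𝒢.IsCutoff c := ⟨hc, hc0, hsupp, hsum⟩
  have hcont := TopGroupoid.continuous_tildeS hcut hEt hProper hact_cont hs_cont hs_mem
  have hmem : ∀ u ∈ 𝒢.units, (u, tildeS 𝒢 act c s u) ∈ Y := fun u hu =>
    TopGroupoid.tildeS_mem hcut hEt hProper hY hact_mem hs_mem hu
  have hequiv := TopGroupoid.tildeS_r_eq_act hcut hEt hProper hY hact_mem hact_mul haffine hs_mem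
  exact ⟨hcont.continuousOn, hmem, hequiv,
    exists_equivariant_linear_homotopy hYanchor hY haffine hcont hmem hequiv⟩

/-- Let `G` be a proper étale Hausdorff groupoid with compact orbit
space (here: with a compactly supported cutoff function `c`), acting affinely on a
space `Y ⊆ G⁽⁰⁾ × V` with convex fibres whose anchor map (the first projection)
admits a continuous section `s`. Then `s̃(u) = Σ_{k∈G^u} c(d k)•(k·s(d k))` is a
continuous `G`-equivariant section of the anchor map, and consequently the anchor
map is a `G`-equivariant homotopy equivalence `Y ≃ G⁽⁰⁾` (via the fibrewise linear
homotopy onto `s̃`). -/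
theorem equivariant_section_and_homotopy_equivalence {G : Type u}
    [TopologicalSpace G] [T2Space G] [LocallyCompactSpace G]
    {V : Type v} [AddCommGroup V] [Module ℝ V] [TopologicalSpace V]
    [IsTopologicalAddGroup V] [ContinuousSMul ℝ V]
    (𝒢 : TopGroupoid G) (hEt : 𝒢.Etale)
    (hProper : ∀ K : Set G, K ⊆ 𝒢.units → IsCompact K →
      IsCompact (𝒢.d ⁻¹' K ∩ 𝒢.r ⁻¹' K))
    (Y : Set (G × V)) (hYanchor : ∀ y ∈ Y, y.1 ∈ 𝒢.units)
    -- the fibres `Y_u` are convex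
    (hconv : ∀ u v w, (u, v) ∈ Y → (u, w) ∈ Y → ∀ a : ℝ, 0 ≤ a → a ≤ 1 →
      (u, a • v + (1 - a) • w) ∈ Y)
    -- a continuous affine action of `G` on `Y`
    (act : G → V → V)
    (hact_mem : ∀ g v, (𝒢.d g, v) ∈ Y → (𝒢.r g, act g v) ∈ Y)
    (hact_cont : ContinuousOn (fun q : G × V => act q.1 q.2)
      {q : G × V | (𝒢.d q.1, q.2) ∈ Y})
    (hact_mul : ∀ g h v, 𝒢.Comp g h → (𝒢.d h, v) ∈ Y →
      act (𝒢.mul g h) v = act g (act h v))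
    (hact_unit : ∀ u v, u ∈ 𝒢.units → (u, v) ∈ Y → act u v = v)
    (haffine : ∀ g v w, (𝒢.d g, v) ∈ Y → (𝒢.d g, w) ∈ Y → ∀ a : ℝ, 0 ≤ a → a ≤ 1 →
      act g (a • v + (1 - a) • w) = a • act g v + (1 - a) • act g w)
    -- a compactly supported cutoff function
    (c : G → ℝ) (hc : Continuous c) (hc0 : ∀ u, 0 ≤ c u)
    (hsupp : HasCompactSupport c)
    (hsum : ∀ u ∈ 𝒢.units, ∑ᶠ k ∈ {k : G | 𝒢.r k = u}, c (𝒢.d k) = 1)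
    -- a continuous (not necessarily equivariant) section of the anchor map
    (s : G → V) (hs_cont : ContinuousOn s 𝒢.units)
    (hs_mem : ∀ u ∈ 𝒢.units, (u, s u) ∈ Y) :
    -- `s̃` is a continuous equivariant section:
    ContinuousOn (tildeS 𝒢 act c s) 𝒢.units ∧
    (∀ u ∈ 𝒢.units, (u, tildeS 𝒢 act c s u) ∈ Y) ∧
    (∀ g : G, tildeS 𝒢 act c s (𝒢.r g) = act g (tildeS 𝒢 act c s (𝒢.d g))) ∧
    -- consequently the anchor map is a `G`-equivariant homotopy equivalence,
    -- witnessed by the fibrewise linear homotopy from `id` to `s̃ ∘ p`: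
    (∃ F : ℝ × (G × V) → G × V,
      ContinuousOn F (Set.Icc (0 : ℝ) 1 ×ˢ Y) ∧
      (∀ t ∈ Set.Icc (0 : ℝ) 1, ∀ y ∈ Y, F (t, y) ∈ Y ∧ (F (t, y)).1 = y.1) ∧
      (∀ y ∈ Y, F (0, y) = y) ∧
      (∀ y ∈ Y, F (1, y) = (y.1, tildeS 𝒢 act c s y.1)) ∧
      (∀ t ∈ Set.Icc (0 : ℝ) 1, ∀ g : G, ∀ v : V, (𝒢.d g, v) ∈ Y →
        F (t, (𝒢.r g, act g v)) = (𝒢.r g, act g (F (t, (𝒢.d g, v))).2))) :=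
  equivariant_section_and_homotopy_equivalence_general 𝒢 hEt hProper Y hYanchor hconv act hact_mem
    hact_cont hact_mul haffine c hc hc0 hsupp hsum s hs_cont hs_mem
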